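/- Let d, m be positive integers with d dividing m, d < m, and gcd(2^d − 1, m/d) = 1. Then the number of y ∈ F_{2^m}, y ≠ 0, such that Tr_{2^m/2^d}(y^{2^d−1}) = 0 equals 2^{m−d} − 1. -/

import Mathlib

open scoped Classical BigOperators

noncomputable section

/-- The finite field `F_{2^m}`. -/
abbrev Fq (m : ℕ) := GaloisField 2 m

noncomputable instance (m : ℕ) : Fintype (Fq m) := Fintype.ofFinite _

/-- The relative trace `Tr_{2^m/2^d} : F_{2^m} → F_{2^d}`,
`x ↦ Σ_{j<m/d} x^(2^(dj))`, viewed inside `F_{2^m}`. -/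
def trRel (m d : ℕ) (x : Fq m) : Fq m := ∑ j ∈ Finset.range (m / d), x ^ 2 ^ (d * j)


/-!
Put `q = 2^d` and `M = 1 + q + ⋯ + q^(m/d - 1)`, so that `2^m - 1 = (q - 1) M` and
`M ≡ m/d [MOD q - 1]`. Hence `q - 1` and `M` are coprime, `e = (q - 1) + M` is prime to
`2^m - 1`, and `y ↦ y^e` permutes `F_{2^m}`. For `y ≠ 0` we have `y^e = y^M y^(q-1)` with
`y^M ∈ F_q^*`, and the trace is `F_q`-linear, so `Tr(y^(q-1)) = 0 ↔ Tr(y^e) = 0`. It remains to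
count the kernel of the trace: it is the root set of a polynomial of degree `2^(m-d)`, its image
lies in the `2^d` roots of `X^q - X`, and `|ker| |im| = 2^m`.
-/

open Finset Polynomial

lemma Fq.card_eq {m : ℕ} (hm : m ≠ 0) : Fintype.card (Fq m) = 2 ^ m := by
  rw [← Nat.card_eq_fintype_card, GaloisField.card 2 m hm]

lemma pow_pow_eq_self_of_pow_eq_self {M : Type*} [Monoid M] {c : M} {k : ℕ} (hc : c ^ k = c)
    (j : ℕ) : c ^ k ^ j = c := by
  induction j with
  | zero => simp
  | succ j ih => rw [pow_succ, pow_mul, ih, hc]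

lemma Nat.coprime_sub_one_geom_sum {q n : ℕ} (hq : 1 ≤ q) (h : (q - 1).Coprime n) :
    (q - 1).Coprime (∑ j ∈ range n, q ^ j) := by
  have hmod : ∑ j ∈ range n, q ^ j ≡ n [MOD q - 1] := by
    simpa using Nat.ModEq.sum (s := range n) fun j _ => (Nat.modEq_sub hq).pow j
  rw [Nat.coprime_comm, Nat.Coprime, hmod.gcd_eq]
  exact Nat.coprime_comm.mp h

lemma card_filter_eval_eq_zero_le {R : Type*} [CommRing R] [IsDomain R] [Fintype R] {p : R[X]}
    (hp : p ≠ 0) : #{x | p.eval x = 0} ≤ p.natDegree :=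
  card_le_degree_of_subset_roots fun x hx => by simpa [mem_roots hp] using hx

lemma FiniteField.pow_bijective_of_coprime {K : Type*} [Field K] [Fintype K] {e : ℕ}
    (he : e ≠ 0) (hcop : (Fintype.card K - 1).Coprime e) :
    Function.Bijective fun x : K => x ^ e := by
  refine Finite.injective_iff_bijective.mp fun x y hxy => ?_
  rcases eq_or_ne x 0 with rfl | hx
  · exact ((pow_eq_zero_iff he).mp (hxy.symm.trans (zero_pow he))).symm
  rcases eq_or_ne y 0 with rfl | hy
  · exact (pow_eq_zero_iff he).mp (hxy.trans (zero_pow he))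
  have hunits : (Nat.card Kˣ).Coprime e := by
    rwa [Nat.card_eq_fintype_card, Fintype.card_units]
  have := hunits.pow_left_bijective.injective (a₁ := Units.mk0 x hx) (a₂ := Units.mk0 y hy)
    (Units.ext hxy)
  simpa using congrArg Units.val this

lemma AddMonoidHom.card_ker_eq_of_le {G H : Type*} [AddGroup G] [AddGroup H] [Finite G]
    (f : G →+ H) {a b : ℕ} (hker : Nat.card f.ker ≤ a) (hrange : Nat.card f.range ≤ b)
    (hG : Nat.card G = a * b) : Nat.card f.ker = a := by
  have hmul : Nat.card f.ker * Nat.card f.range = a * b := by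
    rw [← AddSubgroup.index_ker, AddSubgroup.card_mul_index, hG]
  have hb : 0 < b := Nat.pos_of_mul_pos_left (hG ▸ Nat.card_pos)
  refine le_antisymm hker (Nat.le_of_mul_le_mul_right ?_ hb)
  calc a * b = Nat.card f.ker * Nat.card f.range := hmul.symm
    _ ≤ Nat.card f.ker * b := Nat.mul_le_mul_left _ hrange

section trRel

variable {m d : ℕ}

lemma trRel_add (x y : Fq m) : trRel m d (x + y) = trRel m d x + trRel m d y := by
  simp only [trRel, ← sum_add_distrib, add_pow_char_pow]

lemma trRel_mul_of_pow_eq_self {c : Fq m} (hc : c ^ 2 ^ d = c) (x : Fq m) :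
    trRel m d (c * x) = c * trRel m d x := by
  simp only [trRel, mul_sum, mul_pow, pow_mul, pow_pow_eq_self_of_pow_eq_self hc]

lemma trRel_pow_two_pow (hm : m ≠ 0) (hdm : d ∣ m) (x : Fq m) :
    trRel m d x ^ 2 ^ d = trRel m d x := by
  set f : ℕ → Fq m := fun j => x ^ 2 ^ (d * j)
  have hwrap : f (m / d) = f 0 := by
    simp only [f, Nat.mul_div_cancel' hdm, mul_zero, pow_zero, pow_one, ← Fq.card_eq hm,
      FiniteField.pow_card]
  have hshift : trRel m d x ^ 2 ^ d = ∑ j ∈ range (m / d), f (j + 1) := by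
    simp only [trRel, sum_pow_char_pow, f, ← pow_mul, ← pow_add, Nat.mul_succ]
  have := sum_range_succ' f (m / d)
  rw [sum_range_succ, hwrap] at this
  rw [hshift, trRel, add_right_cancel this.symm]

variable (m d) in
def trRelHom : Fq m →+ Fq m := AddMonoidHom.mk' (trRel m d) trRel_add

end trRel

def trRelPoly (K : Type*) [Semiring K] (d n : ℕ) : K[X] := ∑ j ∈ range n, X ^ 2 ^ (d * j)

section trRelPoly

variable {K : Type*} [Semiring K] {d n : ℕ}

lemma coeff_one_trRelPoly (hd : d ≠ 0) (hn : n ≠ 0) : (trRelPoly K d n).coeff 1 = 1 := by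
  rw [trRelPoly, finsetSum_coeff, sum_eq_single 0]
  · simp
  · intro j _ hj
    have : 1 < 2 ^ (d * j) := Nat.one_lt_two_pow (by positivity)
    rw [coeff_X_pow, if_neg (by omega)]
  · simp [Nat.pos_of_ne_zero hn]

lemma natDegree_trRelPoly_le : (trRelPoly K d n).natDegree ≤ 2 ^ (d * (n - 1)) :=
  natDegree_sum_le_of_forall_le _ _ fun j hj => (natDegree_X_pow_le _).trans <|
    Nat.pow_le_pow_right two_pos <| Nat.mul_le_mul_left _ <| by simp at hj; omega

end trRelPoly

section trRelKer

variable {m d : ℕ}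

lemma eval_trRelPoly (x : Fq m) : (trRelPoly (Fq m) d (m / d)).eval x = trRel m d x := by
  simp [trRelPoly, trRel, eval_finsetSum]

lemma card_filter_trRel_eq_zero_le (hm : m ≠ 0) (hdm : d ∣ m) :
    #{x : Fq m | trRel m d x = 0} ≤ 2 ^ (m - d) := by
  have hd : d ≠ 0 := ne_zero_of_dvd_ne_zero hm hdm
  have hn : m / d ≠ 0 := (Nat.div_pos (Nat.le_of_dvd (Nat.pos_of_ne_zero hm) hdm)
    (Nat.pos_of_ne_zero hd)).ne'
  have hP : trRelPoly (Fq m) d (m / d) ≠ 0 := fun h => by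
    simpa [h] using coeff_one_trRelPoly (K := Fq m) hd hn
  calc #{x : Fq m | trRel m d x = 0}
      = #{x | (trRelPoly (Fq m) d (m / d)).eval x = 0} := by simp only [eval_trRelPoly]
    _ ≤ (trRelPoly (Fq m) d (m / d)).natDegree := card_filter_eval_eq_zero_le hP
    _ ≤ 2 ^ (d * (m / d - 1)) := natDegree_trRelPoly_le
    _ = 2 ^ (m - d) := by rw [Nat.mul_sub_one, Nat.mul_div_cancel' hdm]

lemma card_range_trRelHom_le (hm : m ≠ 0) (hdm : d ∣ m) :
    Nat.card (trRelHom m d).range ≤ 2 ^ d := by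
  have hq : 1 < 2 ^ d := Nat.one_lt_two_pow (ne_zero_of_dvd_ne_zero hm hdm)
  calc Nat.card (trRelHom m d).range
      = ((trRelHom m d).range : Set (Fq m)).ncard := (Nat.card_coe_set_eq _)
    _ ≤ (({x | (X ^ 2 ^ d - X : (Fq m)[X]).eval x = 0} : Finset (Fq m)) : Set (Fq m)).ncard := by
      refine Set.ncard_le_ncard ?_ (Set.toFinite _)
      rintro _ ⟨x, rfl⟩
      simp [trRelHom, trRel_pow_two_pow hm hdm]
    _ = #{x | (X ^ 2 ^ d - X : (Fq m)[X]).eval x = 0} := Set.ncard_coe_finset _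
    _ ≤ (X ^ 2 ^ d - X : (Fq m)[X]).natDegree :=
      card_filter_eval_eq_zero_le (FiniteField.X_pow_card_sub_X_ne_zero _ hq)
    _ = 2 ^ d := FiniteField.X_pow_card_sub_X_natDegree_eq _ hq

lemma card_filter_trRel_eq_zero (hm : m ≠ 0) (hdm : d ∣ m) :
    #{x : Fq m | trRel m d x = 0} = 2 ^ (m - d) := by
  have hker : Nat.card (trRelHom m d).ker = #{x : Fq m | trRel m d x = 0} := by
    rw [Nat.card_eq_fintype_card, Fintype.card_subtype]
    simp [trRelHom, AddMonoidHom.mem_ker]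
  have hcard : Nat.card (Fq m) = 2 ^ (m - d) * 2 ^ d := by
    rw [← pow_add, Nat.sub_add_cancel (Nat.le_of_dvd (Nat.pos_of_ne_zero hm) hdm),
      GaloisField.card 2 m hm]
  rw [← hker]
  exact (trRelHom m d).card_ker_eq_of_le (hker ▸ card_filter_trRel_eq_zero_le hm hdm)
    (card_range_trRelHom_le hm hdm) hcard

lemma card_filter_ne_zero_trRel_eq_zero (hm : m ≠ 0) (hdm : d ∣ m) :
    #{x : Fq m | x ≠ 0 ∧ trRel m d x = 0} = 2 ^ (m - d) - 1 := by
  have hzero : (0 : Fq m) ∈ ({x | trRel m d x = 0} : Finset (Fq m)) := by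
    rw [mem_filter_univ]
    exact map_zero (trRelHom m d)
  rw [← card_filter_trRel_eq_zero hm hdm, ← card_erase_of_mem hzero]
  congr 1
  ext x
  simp [and_comm]

end trRelKer

lemma FiniteField.pow_pow_eq_self_of_mul_eq_card_sub_one {K : Type*} [Field K] [Fintype K]
    {q M : ℕ} (hq : 1 ≤ q) (hM : M * (q - 1) = Fintype.card K - 1) {y : K} (hy : y ≠ 0) :
    (y ^ M) ^ q = y ^ M := by
  rw [← pow_mul, show M * q = M * (q - 1) + M by rw [Nat.mul_sub_one, Nat.sub_add_cancel
    (Nat.le_mul_of_pos_right _ hq)], pow_add, hM, FiniteField.pow_card_sub_one_eq_one y hy, one_mul]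

lemma trRel_pow_eq_zero_iff_pow_add {m d M : ℕ}
    (hM : M * (2 ^ d - 1) = Fintype.card (Fq m) - 1) {y : Fq m} (hy : y ≠ 0) :
    trRel m d (y ^ (2 ^ d - 1)) = 0 ↔ trRel m d (y ^ (2 ^ d - 1 + M)) = 0 := by
  rw [pow_add, mul_comm, trRel_mul_of_pow_eq_self
    (FiniteField.pow_pow_eq_self_of_mul_eq_card_sub_one Nat.one_le_two_pow hM hy),
    mul_eq_zero, or_iff_right (pow_ne_zero _ hy)]

theorem stmt18_general (d m : ℕ) (hdvd : d ∣ m) (hlt : d < m)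
    (hg : Nat.gcd (2 ^ d - 1) (m / d) = 1) :
    (Finset.univ.filter (fun y : Fq m =>
        y ≠ 0 ∧ trRel m d (y ^ (2 ^ d - 1)) = 0)).card
      = 2 ^ (m - d) - 1 := by
  have hm : m ≠ 0 := by omega
  set M := ∑ j ∈ range (m / d), (2 ^ d) ^ j
  have hM : M * (2 ^ d - 1) = Fintype.card (Fq m) - 1 := by
    rw [geom_sum_mul_of_one_le Nat.one_le_two_pow, ← pow_mul, Nat.mul_div_cancel' hdvd,
      Fq.card_eq hm]
  have hM0 : M ≠ 0 := by
    rintro h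
    rw [h, zero_mul, Fq.card_eq hm] at hM
    have := Nat.one_lt_two_pow hm
    omega
  have hcop : (2 ^ d - 1).Coprime M := Nat.coprime_sub_one_geom_sum Nat.one_le_two_pow hg
  have he : (Fintype.card (Fq m) - 1).Coprime (2 ^ d - 1 + M) := by
    rw [← hM]
    exact Nat.Coprime.mul_left (Nat.coprime_add_self_right.mpr hcop.symm)
      (Nat.coprime_self_add_right.mpr hcop)
  calc #{y : Fq m | y ≠ 0 ∧ trRel m d (y ^ (2 ^ d - 1)) = 0}
      = #{y : Fq m | y ≠ 0 ∧ trRel m d (y ^ (2 ^ d - 1 + M)) = 0} :=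
        congrArg card (filter_congr fun y _ => and_congr_right (trRel_pow_eq_zero_iff_pow_add hM))
    _ = #{t : Fq m | t ≠ 0 ∧ trRel m d t = 0} :=
        card_bijective _ (FiniteField.pow_bijective_of_coprime (by omega) he) (by simp [hM0])
    _ = 2 ^ (m - d) - 1 := card_filter_ne_zero_trRel_eq_zero hm hdvd

/-- if `d ∣ m`, `d < m` and `gcd(2^d − 1, m/d) = 1`, then
`#{y ∈ F_{2^m}* : Tr_{2^m/2^d}(y^(2^d−1)) = 0} = 2^(m−d) − 1`. -/
theorem stmt18 (d m : ℕ) (hd : 0 < d) (hdvd : d ∣ m) (hlt : d < m)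
    (hg : Nat.gcd (2 ^ d - 1) (m / d) = 1) :
    (Finset.univ.filter (fun y : Fq m =>
        y ≠ 0 ∧ trRel m d (y ^ (2 ^ d - 1)) = 0)).card
      = 2 ^ (m - d) - 1 :=
  stmt18_general d m hdvd hlt hg
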